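/- For every policy π, Pr^π(◇B) = Σ_{s∈S\B} Σ_{a∈A(s)} ξ^π(s,a) · r(s,a), as an identity in [0,∞]; that is, the probability of reaching the absorbing set B equals the expected total reward accrued when each state–action pair outside B is rewarded by its one-step probability r(s,a) of entering B. -/

import Mathlib

/-!
The mass that the occupancy measure puts on `B` grows from one stage to the next by exactly the
expected one-step reward `Σ_{s∉B} Σ_a μ_t(s,a) r(s,a)` collected outside `B`: the decision rules
sum to one, and an absorbing state sends all of its mass back into `B`. As `s0 ∉ B`, the mass on
`B` at stage `t` is therefore the total reward of the first `t` stages, and the supremum of these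
partial sums is the expected total reward.
-/

open scoped ENNReal

section

variable {S A : Type} [Fintype S] [Fintype A] [DecidableEq S] [DecidableEq A]

/-- A policy: a sequence of decision rules, each supported on the available actions. -/
def IsPolicy (avail : S → Finset A) (π : ℕ → S → A → ℝ) : Prop :=
  ∀ t s, (∀ a, 0 ≤ π t s a) ∧ (∀ a, a ∉ avail s → π t s a = 0) ∧
    (∑ a ∈ avail s, π t s a) = 1

/-- A stationary policy uses the same decision rule at every stage. -/
def IsStationaryPolicy (π : ℕ → S → A → ℝ) : Prop := ∀ t, π t = π 0

/-- Occupancy measures: `occ P avail init π t s a` is `μ^π_{t+1}(s,a)` (stages indexed from 1). -/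
def occ (P : S → A → S → ℝ) (avail : S → Finset A) (init : S)
    (π : ℕ → S → A → ℝ) : ℕ → S → A → ℝ
  | 0 => fun s a => if s = init then π 0 s a else 0
  | t + 1 => fun s' a' =>
      π (t + 1) s' a' * ∑ s : S, ∑ a ∈ avail s, P s a s' * occ P avail init π t s a

/-- Expected residence time `ξ^π(s,a) ∈ [0,∞]`. -/
noncomputable def resTime (P : S → A → S → ℝ) (avail : S → Finset A) (init : S)
    (π : ℕ → S → A → ℝ) (s : S) (a : A) : ℝ≥0∞ :=
  ∑' t : ℕ, ENNReal.ofReal (occ P avail init π t s a)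

/-- Probability of reaching the absorbing set `B`. -/
noncomputable def reachProb (P : S → A → S → ℝ) (avail : S → Finset A) (B : Finset S)
    (init : S) (π : ℕ → S → A → ℝ) : ℝ≥0∞ :=
  ⨆ t : ℕ, ∑ s ∈ B, ∑ a ∈ avail s, ENNReal.ofReal (occ P avail init π t s a)

/-- `x*_s`: optimal probability of reaching `B` starting from `s`. -/
noncomputable def xstar (P : S → A → S → ℝ) (avail : S → Finset A) (B : Finset S)
    (s : S) : ℝ≥0∞ :=
  ⨆ π : {π : ℕ → S → A → ℝ // IsPolicy avail π}, reachProb P avail B s π.1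

/-- A state is absorbing if every available action loops on it with probability 1. -/
def Absorbing (P : S → A → S → ℝ) (avail : S → Finset A) (s : S) : Prop :=
  ∀ a ∈ avail s, P s a s = 1

/-- Expected total cost `f_c(π) ∈ [0,∞]`. -/
noncomputable def totalCost (P : S → A → S → ℝ) (avail : S → Finset A) (init : S)
    (c : S → A → ℝ) (π : ℕ → S → A → ℝ) : ℝ≥0∞ :=
  ∑ s : S, ∑ a ∈ avail s, resTime P avail init π s a * ENNReal.ofReal (c s a)

end

open Finset

lemma Absorbing.sum_mem_eq_one {S A : Type} [Fintype S] {P : S → A → S → ℝ}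
    {avail : S → Finset A} {B : Finset S} {s : S} {a : A} (hP0 : ∀ s', 0 ≤ P s a s')
    (hP1 : ∑ s', P s a s' = 1) (habs : Absorbing P avail s) (hs : s ∈ B) (ha : a ∈ avail s) :
    ∑ s' ∈ B, P s a s' = 1 :=
  le_antisymm (hP1 ▸ sum_le_univ_sum_of_nonneg hP0)
    (habs a ha ▸ single_le_sum (fun s' _ => hP0 s') hs)

lemma ENNReal.ofReal_sum_sum_of_nonneg {ι κ : Type*} {s : Finset ι} {t : ι → Finset κ}
    {f : ι → κ → ℝ} (hf : ∀ i ∈ s, ∀ j ∈ t i, 0 ≤ f i j) :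
    ENNReal.ofReal (∑ i ∈ s, ∑ j ∈ t i, f i j) = ∑ i ∈ s, ∑ j ∈ t i, ENNReal.ofReal (f i j) := by
  rw [ENNReal.ofReal_sum_of_nonneg fun i hi => sum_nonneg (hf i hi)]
  exact sum_congr rfl fun i hi => ENNReal.ofReal_sum_of_nonneg (hf i hi)

section Occupancy

variable {S A : Type} [Fintype S] [DecidableEq S]
  {P : S → A → S → ℝ} {avail : S → Finset A} {init : S} {π : ℕ → S → A → ℝ}

lemma occ_nonneg (hP0 : ∀ s a s', 0 ≤ P s a s') (hπ : IsPolicy avail π) :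
    ∀ t s a, 0 ≤ occ P avail init π t s a
  | 0, s, a => by
    simp only [occ]
    split_ifs
    exacts [(hπ 0 s).1 a, le_rfl]
  | t + 1, s, a =>
    mul_nonneg ((hπ (t + 1) s).1 a) <| sum_nonneg fun _ _ => sum_nonneg fun _ _ =>
      mul_nonneg (hP0 _ _ _) (occ_nonneg hP0 hπ t _ _)

lemma sum_occ_succ (hπ : IsPolicy avail π) (t : ℕ) (s' : S) :
    ∑ a' ∈ avail s', occ P avail init π (t + 1) s' a' =
      ∑ s, ∑ a ∈ avail s, P s a s' * occ P avail init π t s a := by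
  simp only [occ, ← sum_mul, (hπ (t + 1) s').2.2, one_mul]

lemma sum_sum_occ_succ (hπ : IsPolicy avail π) (C : Finset S) (t : ℕ) :
    ∑ s' ∈ C, ∑ a' ∈ avail s', occ P avail init π (t + 1) s' a' =
      ∑ s, ∑ a ∈ avail s, occ P avail init π t s a * ∑ s' ∈ C, P s a s' := by
  simp only [sum_occ_succ hπ, mul_sum]
  rw [sum_comm]
  refine sum_congr rfl fun s _ => ?_
  rw [sum_comm]
  exact sum_congr rfl fun a _ => sum_congr rfl fun s' _ => mul_comm _ _

variable {B : Finset S}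

lemma sum_sum_occ_succ_of_absorbing (hP0 : ∀ s a s', 0 ≤ P s a s')
    (hP1 : ∀ s, ∀ a ∈ avail s, ∑ s', P s a s' = 1) (habs : ∀ s ∈ B, Absorbing P avail s)
    (hπ : IsPolicy avail π) (t : ℕ) :
    ∑ s ∈ B, ∑ a ∈ avail s, occ P avail init π (t + 1) s a =
      ∑ s ∈ B, ∑ a ∈ avail s, occ P avail init π t s a +
        ∑ s ∈ univ \ B, ∑ a ∈ avail s, occ P avail init π t s a * ∑ s' ∈ B, P s a s' := by
  rw [sum_sum_occ_succ hπ, ← sum_sdiff (subset_univ B), add_comm]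
  congr 1
  refine sum_congr rfl fun s hs => sum_congr rfl fun a ha => ?_
  rw [(habs s hs).sum_mem_eq_one (hP0 s a) (hP1 s a ha) hs ha, mul_one]

lemma sum_sum_occ_eq_sum_range (hP0 : ∀ s a s', 0 ≤ P s a s')
    (hP1 : ∀ s, ∀ a ∈ avail s, ∑ s', P s a s' = 1) (habs : ∀ s ∈ B, Absorbing P avail s)
    (hinit : init ∉ B) (hπ : IsPolicy avail π) (t : ℕ) :
    ∑ s ∈ B, ∑ a ∈ avail s, occ P avail init π t s a =
      ∑ u ∈ range t, ∑ s ∈ univ \ B, ∑ a ∈ avail s,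
        occ P avail init π u s a * ∑ s' ∈ B, P s a s' := by
  induction t with
  | zero =>
    refine sum_eq_zero fun s hs => sum_eq_zero fun a _ => if_neg ?_
    rintro rfl
    exact hinit hs
  | succ t ih => rw [sum_sum_occ_succ_of_absorbing hP0 hP1 habs hπ, ih, sum_range_succ]

lemma sum_sum_resTime_mul (hP0 : ∀ s a s', 0 ≤ P s a s') (hπ : IsPolicy avail π)
    (C : Finset S) {r : S → A → ℝ} (hr : ∀ s a, 0 ≤ r s a) :
    ∑ s ∈ C, ∑ a ∈ avail s, resTime P avail init π s a * ENNReal.ofReal (r s a) =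
      ∑' t, ENNReal.ofReal (∑ s ∈ C, ∑ a ∈ avail s, occ P avail init π t s a * r s a) := by
  have hocc := occ_nonneg (init := init) hP0 hπ
  simp only [resTime, ← ENNReal.tsum_mul_right, ← ENNReal.ofReal_mul (hocc _ _ _),
    ENNReal.ofReal_sum_sum_of_nonneg fun s _ a _ => mul_nonneg (hocc _ s a) (hr s a)]
  rw [Summable.tsum_finsetSum fun _ _ => ENNReal.summable]
  exact sum_congr rfl fun s _ => (Summable.tsum_finsetSum fun _ _ => ENNReal.summable).symm

end Occupancy

set_option linter.unusedSectionVars false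

section

variable {S A : Type} [Fintype S] [Fintype A] [DecidableEq S] [DecidableEq A]

theorem reachProb_eq_expected_total_reward_general
    (P : S → A → S → ℝ) (avail : S → Finset A) (s0 : S) (B : Finset S)
    (hP0 : ∀ s a s', 0 ≤ P s a s')
    (hP1 : ∀ s, ∀ a ∈ avail s, (∑ s' : S, P s a s') = 1)
    (habs : ∀ s ∈ B, Absorbing P avail s)
    (hs0 : s0 ∉ B)
    (π : ℕ → S → A → ℝ) (hπ : IsPolicy avail π) :
    reachProb P avail B s0 π =
      ∑ s ∈ Finset.univ \ B, ∑ a ∈ avail s,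
        resTime P avail s0 π s a * ENNReal.ofReal (∑ s' ∈ B, P s a s') := by
  have hocc := occ_nonneg (init := s0) hP0 hπ
  have hr : ∀ s a, 0 ≤ ∑ s' ∈ B, P s a s' := fun s a => sum_nonneg fun s' _ => hP0 s a s'
  rw [sum_sum_resTime_mul hP0 hπ _ hr, ENNReal.tsum_eq_iSup_nat, reachProb]
  refine iSup_congr fun t => ?_
  rw [← ENNReal.ofReal_sum_sum_of_nonneg fun s _ a _ => hocc t s a,
    sum_sum_occ_eq_sum_range hP0 hP1 habs hs0 hπ, ENNReal.ofReal_sum_of_nonneg fun u _ =>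
      sum_nonneg fun s _ => sum_nonneg fun a _ => mul_nonneg (hocc u s a) (hr s a)]

/-- The probability of reaching the absorbing set `B` equals the expected total reward when
each state–action pair outside `B` is rewarded by its one-step probability
`r(s,a) = Σ_{s'∈B} P(s,a,s')` of entering `B`:
`Pr^π(◇B) = Σ_{s∈S\B} Σ_{a∈A(s)} ξ^π(s,a)·r(s,a)`, as an identity in `[0,∞]`. -/
theorem reachProb_eq_expected_total_reward
    (P : S → A → S → ℝ) (avail : S → Finset A) (s0 : S) (B : Finset S)
    (havail : ∀ s, (avail s).Nonempty)
    (hP0 : ∀ s a s', 0 ≤ P s a s')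
    (hP1 : ∀ s, ∀ a ∈ avail s, (∑ s' : S, P s a s') = 1)
    (habs : ∀ s ∈ B, Absorbing P avail s)
    (hs0 : s0 ∉ B)
    (π : ℕ → S → A → ℝ) (hπ : IsPolicy avail π) :
    reachProb P avail B s0 π =
      ∑ s ∈ Finset.univ \ B, ∑ a ∈ avail s,
        resTime P avail s0 π s a * ENNReal.ofReal (∑ s' ∈ B, P s a s') :=
  reachProb_eq_expected_total_reward_general P avail s0 B hP0 hP1 habs hs0 π hπ

end
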